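/- arXiv:2505.18061 — 6 statements merged into one kernel-verified Lean document; each statement's English description precedes it below -/
import Mathlib

section
/- For every positive integer k, every real y > 0, and for P(y, m) := ∑_{j=0}^{m} e^{-y} y^j / j! (the CDF of a Poisson random variable with mean y evaluated at m), it holds that y · P(y, k-1) ≤ k · P(y, k). -/
/-!
Writing `p j = e^{-y} y^j / j!`, the Poisson recursion `y * p j = (j + 1) * p (j + 1)` turns
`y * P(y, k - 1)` into `∑_{j < k} (j + 1) p (j + 1)`; each weight `j + 1` is at most `k`, and the
missing term `p 0` is nonnegative.
-/

open Finset Nat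

theorem mul_mul_pow_div_factorial {K : Type*} [Field K] [CharZero K] (c y : K) (j : ℕ) :
    y * (c * y ^ j / j !) = (j + 1) * (c * y ^ (j + 1) / (j + 1)!) := by
  rw [factorial_succ]
  push_cast
  field_simp
  ring

theorem sum_range_succ_mul_le_mul_sum_range {R : Type*} [Semiring R] [PartialOrder R]
    [IsOrderedRing R] (a : ℕ → R) (ha : ∀ j, 0 ≤ a j) (k : ℕ) :
    ∑ j ∈ range k, ((j : R) + 1) * a (j + 1) ≤ k * ∑ j ∈ range (k + 1), a j :=
  calc ∑ j ∈ range k, ((j : R) + 1) * a (j + 1)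
      ≤ ∑ j ∈ range k, (k : R) * a (j + 1) :=
        sum_le_sum fun j hj => mul_le_mul_of_nonneg_right
          (by exact_mod_cast mono_cast (α := R) (mem_range.mp hj)) (ha _)
    _ = k * ∑ j ∈ range k, a (j + 1) := (mul_sum _ _ _).symm
    _ ≤ k * ∑ j ∈ range (k + 1), a j := by
        rw [sum_range_succ']
        exact mul_le_mul_of_nonneg_left (le_add_of_nonneg_right (ha 0)) k.cast_nonneg

theorem stmt1_general (k : ℕ) (y : ℝ) (hy : 0 < y) :
    y * ∑ j ∈ Finset.range k, Real.exp (-y) * y ^ j / (Nat.factorial j : ℝ)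
      ≤ (k : ℝ) * ∑ j ∈ Finset.range (k + 1), Real.exp (-y) * y ^ j / (Nat.factorial j : ℝ) := by
  rw [mul_sum]
  simp only [mul_mul_pow_div_factorial]
  exact sum_range_succ_mul_le_mul_sum_range (fun j => Real.exp (-y) * y ^ j / j !)
    (fun j => by positivity) k

theorem stmt1 (k : ℕ) (hk : 0 < k) (y : ℝ) (hy : 0 < y) :
    y * ∑ j ∈ Finset.range k, Real.exp (-y) * y ^ j / (Nat.factorial j : ℝ)
      ≤ (k : ℝ) * ∑ j ∈ Finset.range (k + 1), Real.exp (-y) * y ^ j / (Nat.factorial j : ℝ) :=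
  stmt1_general k y hy
end

section
/- For every positive integer k and every α ∈ (1, ∞), the quantity (Γ(k)/Γ(k+1-1/α)) · max over U ∈ (0,∞) of U · exp(-U^{-α}) · ∑_{j=1}^{k} ∑_{s=j}^{∞} U^{-sα}/s! is at least 1 - 1/√(2πk). -/
/-!
Take `U = k^(-1/α)`, so that `U^(-sα) = k^s`. The inner sums are then tails of the exponential
series at `k`, and summing them over `j` gives `k (e^k - k^k/k!)` by a telescoping identity.
Gautschi's inequality `Γ(k + 1 - 1/α) ≤ Γ(k) k^(1 - 1/α)`, a consequence of the log-convexity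
of `Γ`, bounds the Gamma ratio below by `k^(1/α - 1)`. The objective is therefore at least
`1 - k^k e^(-k)/k!`, and Stirling's lower bound for `k!` finishes the proof.
-/

open Finset Real Nat

lemma sum_range_sum_range_succ {R : Type*} [Ring R] (f : ℕ → R) (k : ℕ) :
    ∑ j ∈ range k, ∑ i ∈ range (j + 1), f i = ∑ i ∈ range k, ((k : R) - i) * f i := by
  induction k with
  | zero => simp
  | succ n ih =>
    have hcoeff : ∀ i ∈ range (n + 1),
        (((n + 1 : ℕ) : R) - i) * f i = ((n : R) - i) * f i + f i := fun i _ ↦ by push_cast; noncomm_ring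
    rw [sum_range_succ, ih, sum_congr rfl hcoeff, sum_add_distrib,
      sum_range_succ (fun i ↦ ((n : R) - i) * f i)]
    simp

lemma sum_range_sub_mul_pow_div_factorial (x : ℝ) (n : ℕ) :
    ∑ i ∈ range n, (x - i) * x ^ i / i ! = n * x ^ n / n ! := by
  have hstep : ∀ i ∈ range n, (x - i) * x ^ i / i ! =
      ((i + 1 : ℕ) : ℝ) * x ^ (i + 1) / (i + 1)! - i * x ^ i / i ! := fun i _ ↦ by
    rw [factorial_succ]
    push_cast
    field_simp
    ring
  rw [sum_congr rfl hstep, sum_range_sub (fun i ↦ (i : ℝ) * x ^ i / i !)]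
  simp

lemma tsum_pow_div_factorial_add (x : ℝ) (j : ℕ) :
    ∑' s : ℕ, x ^ (s + j) / (s + j)! = exp x - ∑ i ∈ range j, x ^ i / i ! := by
  have hexp : HasSum (fun n : ℕ ↦ x ^ n / n !) (exp x) := by
    rw [exp_eq_exp_ℝ]
    exact NormedSpace.expSeries_div_hasSum_exp x
  rw [← hexp.tsum_eq, ← hexp.summable.sum_add_tsum_nat_add j]
  ring

lemma sum_Icc_tsum_pow_div_factorial_add_self (k : ℕ) :
    ∑ j ∈ Icc 1 k, ∑' s : ℕ, (k : ℝ) ^ (s + j) / (s + j)! =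
      k * (exp k - k ^ k / k !) := by
  simp only [tsum_pow_div_factorial_add, sum_sub_distrib, sum_const, card_Icc,
    add_tsub_cancel_right, nsmul_eq_mul]
  have hshift : ∑ j ∈ Icc 1 k, ∑ i ∈ range j, (k : ℝ) ^ i / i ! =
      ∑ j ∈ range k, ∑ i ∈ range (j + 1), (k : ℝ) ^ i / i ! := by
    rw [← Ico_add_one_right_eq_Icc, sum_Ico_eq_sum_range]
    simp [add_comm]
  rw [hshift, sum_range_sum_range_succ]
  simp only [← mul_div_assoc]
  rw [sum_range_sub_mul_pow_div_factorial]
  ring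

lemma Real.Gamma_add_le_mul_rpow {x s : ℝ} (hx : 0 < x) (hs0 : 0 < s) (hs1 : s < 1) :
    Gamma (x + s) ≤ Gamma x * x ^ s := by
  have hconv := Gamma_mul_add_mul_le_rpow_Gamma_mul_rpow_Gamma hx (by linarith : 0 < x + 1)
    (by linarith : 0 < 1 - s) hs0 (by ring)
  rwa [show (1 - s) * x + s * (x + 1) = x + s by ring, Gamma_add_one hx.ne',
    mul_rpow hx.le (Gamma_pos_of_pos hx).le, ← mul_assoc, mul_right_comm,
    ← rpow_add (Gamma_pos_of_pos hx), sub_add_cancel, rpow_one] at hconv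

lemma Real.one_le_Gamma_div_Gamma_add_one_sub_inv_mul {x α : ℝ} (hx : 0 < x) (hα : 1 < α) :
    1 ≤ Gamma x / Gamma (x + 1 - 1 / α) * x ^ (-(1 / α)) * x := by
  have hs0 : 0 < 1 - 1 / α := by rw [sub_pos, div_lt_one (by linarith)]; exact hα
  have hGamma : Gamma (x + 1 - 1 / α) ≤ Gamma x * (x ^ (-(1 / α)) * x) := by
    calc Gamma (x + 1 - 1 / α) ≤ Gamma x * x ^ (1 - 1 / α) := by
          rw [add_sub_assoc]
          exact Gamma_add_le_mul_rpow hx hs0 (by simp; positivity)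
      _ = Gamma x * (x ^ (-(1 / α)) * x) := by
          rw [← rpow_add_one hx.ne']
          ring_nf
  rwa [mul_assoc, div_mul_eq_mul_div, one_le_div (Gamma_pos_of_pos (by linarith))]

lemma pow_mul_exp_neg_div_factorial_le {n : ℕ} (hn : n ≠ 0) :
    (n : ℝ) ^ n * exp (-n) / n ! ≤ 1 / √(2 * π * n) := by
  have hstirling := Stirling.le_factorial_stirling n
  rw [div_pow, exp_one_pow] at hstirling
  rw [div_le_div_iff₀ (by positivity) (by positivity), one_mul]
  calc (n : ℝ) ^ n * exp (-n) * √(2 * π * n) = √(2 * π * n) * (n ^ n / exp n) := by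
        rw [exp_neg]; ring
    _ ≤ n ! := hstirling

theorem stmt4 (k : ℕ) (hk : 0 < k) (α : ℝ) (hα : 1 < α) :
    ∃ U : ℝ, 0 < U ∧
      Real.Gamma (k : ℝ) / Real.Gamma ((k : ℝ) + 1 - 1/α) *
          (U * Real.exp (-U ^ (-α)) *
            ∑ j ∈ Finset.Icc 1 k,
              ∑' s : ℕ, U ^ (-(((s + j : ℕ) : ℝ)) * α) / (Nat.factorial (s + j) : ℝ))
        ≥ 1 - 1 / Real.sqrt (2 * Real.pi * k) := by
  have hK : (0 : ℝ) < k := by exact_mod_cast hk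
  have hα0 : α ≠ 0 := by positivity
  set U : ℝ := (k : ℝ) ^ (-(1 / α)) with hU
  have hUpow : ∀ t : ℝ, U ^ (-t * α) = (k : ℝ) ^ t := fun t ↦ by
    rw [hU, ← rpow_mul hK.le]
    field_simp
  have hUα : U ^ (-α) = k := by simpa using hUpow 1
  refine ⟨U, by positivity, ?_⟩
  simp only [hUα, hUpow, rpow_natCast, sum_Icc_tsum_pow_div_factorial_add_self]
  have hratio : 1 ≤ Gamma k / Gamma (k + 1 - 1 / α) * U * k :=
    one_le_Gamma_div_Gamma_add_one_sub_inv_mul hK hα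
  have hexp_tail : exp (-k) * (exp k - k ^ k / k !) = 1 - k ^ k * exp (-k) / k ! := by
    rw [mul_sub, ← exp_add, neg_add_cancel, exp_zero]
    ring
  calc Gamma k / Gamma (k + 1 - 1 / α) * (U * exp (-k) * (k * (exp k - k ^ k / k !)))
      = Gamma k / Gamma (k + 1 - 1 / α) * U * k * (1 - k ^ k * exp (-k) / k !) := by
        rw [← hexp_tail]; ring
    _ ≥ 1 - k ^ k * exp (-k) / k ! := by
        refine le_mul_of_one_le_left ?_ hratio
        rw [← hexp_tail]
        exact mul_nonneg (exp_pos _).le (sub_nonneg.2 (pow_div_factorial_le_exp _ hK.le k))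
    _ ≥ 1 - 1 / √(2 * π * k) := by
        linarith [pow_mul_exp_neg_div_factorial_le hk.ne']
end

section
/- For every positive integer k, the function f_k(y) = y·exp(-y^{-2})·∑_{j=1}^{k}∑_{s=j}^{∞} y^{-2s}/s! on (0,∞) has derivative f_k'(y) = k(1 - P(y^{-2}, k)) - y^{-2} P(y^{-2}, k-1), where P(x, m) = ∑_{j=0}^{m} e^{-x} x^j / j!. -/
/-!
With `x = y⁻²` and `E_n(x) = ∑_{m<n} xᵐ/m!`, the inner tail series is `eˣ - E_j(x)`, so
`f_k(y) = y Q_k(x)` with `Q_k(x) = ∑_{j<k} (1 - P(x, j))`. Each summand has derivative the Poisson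
weight `e⁻ˣ xʲ/j!`, hence `Q_k' = P(x, k-1)`, and `f_k'(y) = Q_k(x) - 2x Q_k'(x)`. The identity
`∑_{j<k} E_{j+1}(x) + x E_k(x) = k E_{k+1}(x)` rewrites `Q_k(x)` as `k(1 - P(x, k)) + x P(x, k-1)`.
-/

open Finset Real
open scoped Nat

noncomputable def expPartialSum (n : ℕ) (x : ℝ) : ℝ := ∑ m ∈ range n, x ^ m / m !

lemma expPartialSum_succ (n : ℕ) (x : ℝ) :
    expPartialSum (n + 1) x = expPartialSum n x + x ^ n / n ! :=
  sum_range_succ _ _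

lemma hasDerivAt_expPartialSum_succ (n : ℕ) (x : ℝ) :
    HasDerivAt (expPartialSum (n + 1)) (expPartialSum n x) x := by
  induction n with
  | zero =>
    show HasDerivAt (fun u => expPartialSum 1 u) _ x
    simpa [expPartialSum] using hasDerivAt_const x (1 : ℝ)
  | succ n ih =>
    have hpow : HasDerivAt (fun u : ℝ => u ^ (n + 1) / (n + 1)!) (x ^ n / n !) x := by
      refine ((hasDerivAt_pow (n + 1) x).div_const ((n + 1)! : ℝ)).congr_deriv ?_
      rw [Nat.factorial_succ, Nat.add_sub_cancel]
      push_cast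
      field_simp
    simpa only [← expPartialSum_succ] using ih.fun_add hpow

lemma tsum_pow_add_div_factorial (x : ℝ) (j : ℕ) :
    ∑' s : ℕ, x ^ (s + j) / (s + j)! = exp x - expPartialSum j x := by
  rw [Real.exp_eq_exp_ℝ, NormedSpace.exp_eq_tsum_div]
  beta_reduce
  rw [← (summable_pow_div_factorial x).sum_add_tsum_nat_add j, expPartialSum, add_sub_cancel_left]

lemma sum_expPartialSum_add_mul (k : ℕ) (x : ℝ) :
    ∑ j ∈ range k, expPartialSum (j + 1) x + x * expPartialSum k x
      = k * expPartialSum (k + 1) x := by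
  induction k with
  | zero => simp [expPartialSum]
  | succ k ih =>
    have hfac : x * (x ^ k / k !) = (k + 1) * (x ^ (k + 1) / (k + 1)!) := by
      push_cast [Nat.factorial_succ]
      field_simp
      ring
    rw [sum_range_succ, expPartialSum_succ (k + 1)]
    push_cast
    linear_combination ih + hfac + x * expPartialSum_succ k x

lemma hasDerivAt_one_sub_exp_neg_mul_expPartialSum (j : ℕ) (x : ℝ) :
    HasDerivAt (fun u => 1 - exp (-u) * expPartialSum (j + 1) u) (exp (-x) * (x ^ j / j !)) x := by
  have hexp : HasDerivAt (fun u => exp (-u)) (-exp (-x)) x := by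
    simpa using (hasDerivAt_neg x).exp
  refine ((hasDerivAt_const x 1).sub (hexp.mul (hasDerivAt_expPartialSum_succ j x))).congr_deriv ?_
  rw [expPartialSum_succ]
  ring

/-- `∑_{j<k} (1 - P(x, j)) = 𝔼[min(N, k)]` for `N ∼ Poisson(x)`. -/
noncomputable def poissonTailSum (k : ℕ) (x : ℝ) : ℝ :=
  ∑ j ∈ range k, (1 - exp (-x) * expPartialSum (j + 1) x)

lemma hasDerivAt_poissonTailSum (k : ℕ) (x : ℝ) :
    HasDerivAt (poissonTailSum k) (exp (-x) * expPartialSum k x) x := by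
  rw [expPartialSum, mul_sum]
  exact HasDerivAt.fun_sum fun j _ => hasDerivAt_one_sub_exp_neg_mul_expPartialSum j x

lemma poissonTailSum_eq (k : ℕ) (x : ℝ) :
    poissonTailSum k x
      = k * (1 - exp (-x) * expPartialSum (k + 1) x) + x * (exp (-x) * expPartialSum k x) := by
  have h := sum_expPartialSum_add_mul k x
  rw [poissonTailSum, sum_sub_distrib, ← mul_sum, sum_const, card_range, nsmul_one]
  linear_combination (-exp (-x)) * h

lemma exp_neg_mul_sum_tsum_pow_add_div_factorial (k : ℕ) (x : ℝ) :
    exp (-x) * ∑ j ∈ Icc 1 k, ∑' s : ℕ, x ^ (s + j) / (s + j)! = poissonTailSum k x := by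
  rw [← Ico_add_one_right_eq_Icc, ← zero_add 1, ← sum_Ico_add', ← range_eq_Ico, mul_sum]
  refine sum_congr rfl fun j _ => ?_
  rw [tsum_pow_add_div_factorial, mul_sub, ← exp_add, neg_add_cancel, exp_zero]

lemma sum_exp_neg_mul_pow_div_factorial (n : ℕ) (x : ℝ) :
    ∑ j ∈ range n, exp (-x) * x ^ j / j ! = exp (-x) * expPartialSum n x := by
  simp only [expPartialSum, mul_sum, mul_div_assoc]

lemma hasDerivAt_rpow_const_div {p y : ℝ} (hy : y ≠ 0) :
    HasDerivAt (fun t : ℝ => t ^ p) (p * y ^ p / y) y := by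
  refine (Real.hasDerivAt_rpow_const (Or.inl hy)).congr_deriv ?_
  rw [rpow_sub_one hy, mul_div_assoc]

theorem stmt9_general (k : ℕ) (y : ℝ) (hy : 0 < y) :
    HasDerivAt
      (fun t : ℝ => t * Real.exp (-t ^ (-2 : ℝ)) *
        ∑ j ∈ Finset.Icc 1 k,
          ∑' s : ℕ, t ^ (-2 * (((s + j : ℕ) : ℝ))) / (Nat.factorial (s + j) : ℝ))
      ((k : ℝ) * (1 - ∑ j ∈ Finset.range (k + 1),
            Real.exp (-(y ^ (-2 : ℝ))) * (y ^ (-2 : ℝ)) ^ j / (Nat.factorial j : ℝ))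
        - y ^ (-2 : ℝ) * ∑ j ∈ Finset.range k,
            Real.exp (-(y ^ (-2 : ℝ))) * (y ^ (-2 : ℝ)) ^ j / (Nat.factorial j : ℝ))
      y := by
  set x := y ^ (-2 : ℝ)
  have hcomp : HasDerivAt (fun t => poissonTailSum k (t ^ (-2 : ℝ)))
      (exp (-x) * expPartialSum k x * (-2 * x / y)) y :=
    (hasDerivAt_poissonTailSum k _).comp y (hasDerivAt_rpow_const_div hy.ne')
  have hf : (fun t : ℝ => t * exp (-t ^ (-2 : ℝ)) *
        ∑ j ∈ Icc 1 k, ∑' s : ℕ, t ^ (-2 * (((s + j : ℕ) : ℝ))) / ((s + j)! : ℝ))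
      =ᶠ[nhds y] fun t => t * poissonTailSum k (t ^ (-2 : ℝ)) := by
    filter_upwards [eventually_gt_nhds hy] with t ht
    simp only [rpow_mul ht.le, rpow_natCast, mul_assoc, exp_neg_mul_sum_tsum_pow_add_div_factorial]
  refine (((hasDerivAt_id' y).mul hcomp).congr_of_eventuallyEq hf).congr_deriv ?_
  rw [sum_exp_neg_mul_pow_div_factorial, sum_exp_neg_mul_pow_div_factorial, poissonTailSum_eq]
  field_simp
  ring

theorem stmt9 (k : ℕ) (hk : 0 < k) (y : ℝ) (hy : 0 < y) :
    HasDerivAt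
      (fun t : ℝ => t * Real.exp (-t ^ (-2 : ℝ)) *
        ∑ j ∈ Finset.Icc 1 k,
          ∑' s : ℕ, t ^ (-2 * (((s + j : ℕ) : ℝ))) / (Nat.factorial (s + j) : ℝ))
      ((k : ℝ) * (1 - ∑ j ∈ Finset.range (k + 1),
            Real.exp (-(y ^ (-2 : ℝ))) * (y ^ (-2 : ℝ)) ^ j / (Nat.factorial j : ℝ))
        - y ^ (-2 : ℝ) * ∑ j ∈ Finset.range k,
            Real.exp (-(y ^ (-2 : ℝ))) * (y ^ (-2 : ℝ)) ^ j / (Nat.factorial j : ℝ))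
      y :=
  stmt9_general k y hy
end

section
/- For every positive integer k, k·(1 - P(k+1, k)) - (k+1)·P(k+1, k-1) > 0, where P(y, m) = ∑_{j=0}^{m} e^{-y} y^j / j! is the Poisson CDF with mean y. -/
/-!
The terms `t j = n ^ j / j!` of the exponential series at `n` satisfy `t (n - 1 - d) ≤ t (n + d)`,
because `(n + d)! / (n - 1 - d)!` is a product of `2d + 1` factors placed symmetrically around `n`,
so it is at most `n ^ (2d + 1)`. Hence the first `n` terms are dominated by the next `n`, and
`2 ∑_{j<n} t j < eⁿ`: a Poisson variable of mean `n` is below `n` with probability `< 1/2`.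
With `y ∑_{j<k} y^j/j! ≤ k ∑_{j≤k} y^j/j!` at `y = k + 1`, the claimed quantity is at least
`k (1 - 2 P(k+1, k)) > 0`.
-/

open Finset Nat Real

theorem Nat.factorial_le_factorial_mul_pow (m d : ℕ) :
    (m + 2 * d + 1)! ≤ m ! * (m + d + 1) ^ (2 * d + 1) := by
  induction d generalizing m with
  | zero => simp [Nat.factorial_succ, mul_comm]
  | succ d ih =>
    have hcenter : (m + 1) * (m + 2 * d + 3) ≤ (m + d + 2) ^ 2 := by nlinarith
    calc (m + 2 * (d + 1) + 1)! = (m + 2 * d + 3) * ((m + 1) + 2 * d + 1)! := by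
          rw [show m + 2 * (d + 1) + 1 = (m + 1) + 2 * d + 1 + 1 by ring, Nat.factorial_succ]
          ring_nf
      _ ≤ (m + 2 * d + 3) * ((m + 1)! * (m + d + 2) ^ (2 * d + 1)) := by
          gcongr
          exact (ih (m + 1)).trans_eq (by ring_nf)
      _ = m ! * ((m + 1) * (m + 2 * d + 3)) * (m + d + 2) ^ (2 * d + 1) := by
          rw [Nat.factorial_succ]; ring
      _ ≤ m ! * (m + d + 2) ^ 2 * (m + d + 2) ^ (2 * d + 1) := by gcongr
      _ = m ! * (m + (d + 1) + 1) ^ (2 * (d + 1) + 1) := by ring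

theorem pow_div_factorial_le_pow_div_factorial_symm (m d : ℕ) :
    ((m + d + 1 : ℕ) : ℝ) ^ m / m ! ≤
      ((m + d + 1 : ℕ) : ℝ) ^ (m + 2 * d + 1) / (m + 2 * d + 1)! := by
  have hfac : ((m + 2 * d + 1)! : ℝ) ≤ m ! * ((m + d + 1 : ℕ) : ℝ) ^ (2 * d + 1) := by
    exact_mod_cast Nat.factorial_le_factorial_mul_pow m d
  rw [div_le_div_iff₀ (by positivity) (by positivity)]
  calc _ ≤ ((m + d + 1 : ℕ) : ℝ) ^ m * (m ! * ((m + d + 1 : ℕ) : ℝ) ^ (2 * d + 1)) := by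
        gcongr
    _ = _ := by ring

theorem two_mul_sum_range_pow_div_factorial_lt_exp (n : ℕ) :
    2 * ∑ j ∈ range n, (n : ℝ) ^ j / j ! < exp n := by
  rcases Nat.eq_zero_or_pos n with rfl | hn
  · simp
  set t : ℕ → ℝ := fun j ↦ (n : ℝ) ^ j / (j !)
  have hreflect : ∑ j ∈ range n, t j ≤ ∑ j ∈ range n, t (n + j) := by
    rw [← sum_range_reflect]
    refine sum_le_sum fun d hd ↦ ?_
    have hm : n - 1 - d + d + 1 = n := by have := mem_range.mp hd; omega
    have := pow_div_factorial_le_pow_div_factorial_symm (n - 1 - d) d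
    rwa [hm, show n - 1 - d + 2 * d + 1 = n + d by omega] at this
  have hlast : 0 < t (n + n) := by positivity
  have hexp : ∑ j ∈ range (n + n + 1), t j ≤ exp n := sum_le_exp_of_nonneg (by positivity) _
  rw [sum_range_succ, sum_range_add] at hexp
  linarith

theorem mul_sum_range_pow_div_factorial_le {x : ℝ} (hx : 0 ≤ x) (k : ℕ) :
    x * ∑ j ∈ range k, x ^ j / j ! ≤ k * ∑ j ∈ range (k + 1), x ^ j / j ! := by
  have hterm : ∀ j ∈ range k, x * (x ^ j / j !) ≤ k * (x ^ (j + 1) / (j + 1)!) := by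
    intro j hj
    have hjk : (j : ℝ) + 1 ≤ k := by exact_mod_cast mem_range.mp hj
    calc x * (x ^ j / j !) = ((j : ℝ) + 1) * (x ^ (j + 1) / (j + 1)!) := by
          rw [Nat.factorial_succ]; push_cast; field_simp; ring
      _ ≤ k * (x ^ (j + 1) / (j + 1)!) := by gcongr
  calc x * ∑ j ∈ range k, x ^ j / j !
      ≤ k * ∑ j ∈ range k, x ^ (j + 1) / (j + 1)! := by
        rw [mul_sum, mul_sum]; exact sum_le_sum hterm
    _ ≤ k * ∑ j ∈ range (k + 1), x ^ j / j ! := by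
        rw [sum_range_succ' _ k]; gcongr; simp

theorem stmt10 (k : ℕ) (hk : 0 < k) :
    0 < (k : ℝ) * (1 - ∑ j ∈ Finset.range (k + 1),
          Real.exp (-((k : ℝ) + 1)) * ((k : ℝ) + 1) ^ j / (Nat.factorial j : ℝ))
        - ((k : ℝ) + 1) * ∑ j ∈ Finset.range k,
          Real.exp (-((k : ℝ) + 1)) * ((k : ℝ) + 1) ^ j / (Nat.factorial j : ℝ) := by
  set y : ℝ := (k : ℝ) + 1
  simp_rw [mul_div_assoc, ← mul_sum]
  set P := ∑ j ∈ range (k + 1), y ^ j / (j !)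
  set Q := ∑ j ∈ range k, y ^ j / (j !)
  have hmedian : 2 * P < exp y := by
    simpa [y] using two_mul_sum_range_pow_div_factorial_lt_exp (k + 1)
  have hshift : y * Q ≤ k * P := mul_sum_range_pow_div_factorial_le (by positivity) k
  have hexp : exp (-y) * exp y = 1 := by rw [← exp_add, neg_add_cancel, exp_zero]
  have hk' : (0 : ℝ) < k := by exact_mod_cast hk
  have hE := exp_pos (-y)
  nlinarith [mul_le_mul_of_nonneg_left hshift hE.le, mul_lt_mul_of_pos_left hmedian hE,
    mul_pos hk' hE]
end

section
/- For every positive integer k, ∑_{j=0}^{k-1} (k+1)^j / j! ≤ (1/2) e^{k+1} - (k+1)^k / k! and (1/2) e^{k+1} - (k+1)^k / k! < 2 k^{k+1} / k!... specifically: ∑_{j=0}^{k-1} (k+1)^j / j! < 2·k^{k+1}/k!. -/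
/-!
Write `t j = x ^ j / j !` with `x = k + 1`. Since `(k + 1 + i)! / (k - i)!` is a product of
`2 i + 1` integers centred at `k + 1`, we get `t (k - i) ≤ t (k + 1 + i)`: the head `∑_{j ≤ k} t j`
is at most the next block of `k + 1` terms, so it is at most half of `e ^ x`. Hence
`e ^ x / 2 - t k` is at most the tail from `k + 2` on (using `t (k + 1) = t k`), which a geometric
series with ratio `(k + 1) / (k + 3)` bounds by `t (k + 2) (k + 3) / 2`. Finally
`(1 + 1 / k) ^ k ≤ e` turns this into `2 k ^ (k + 1) / k !` for `k ≥ 4`; the cases `k ≤ 3` are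
numerical.
-/

open Finset Nat Real

theorem Nat.factorial_add_two_mul_add_one_le (j i : ℕ) :
    (j + 2 * i + 1)! ≤ (j + i + 1) ^ (2 * i + 1) * j ! := by
  induction i generalizing j with
  | zero => simp [Nat.factorial_succ]
  | succ i ih =>
    have hpair : (j + 2 * i + 3) * (j + 1) ≤ (j + i + 2) ^ 2 := by nlinarith
    calc (j + 2 * (i + 1) + 1)! = (j + 2 * i + 3) * (j + 1 + 2 * i + 1)! := by
          rw [show j + 2 * (i + 1) + 1 = (j + 1 + 2 * i + 1) + 1 by ring, Nat.factorial_succ]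
          ring
      _ ≤ (j + 2 * i + 3) * ((j + 1 + i + 1) ^ (2 * i + 1) * (j + 1)!) := by gcongr; exact ih _
      _ = (j + 2 * i + 3) * (j + 1) * ((j + i + 2) ^ (2 * i + 1) * j !) := by
          rw [Nat.factorial_succ]; ring
      _ ≤ (j + i + 2) ^ 2 * ((j + i + 2) ^ (2 * i + 1) * j !) := by gcongr
      _ = (j + (i + 1) + 1) ^ (2 * (i + 1) + 1) * j ! := by ring

theorem pow_div_factorial_le_pow_add_div_factorial {x : ℝ} {j i : ℕ}
    (hx : (j + i + 1 : ℝ) ≤ x) :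
    x ^ j / j ! ≤ x ^ (j + 2 * i + 1) / (j + 2 * i + 1)! := by
  have hx0 : 0 ≤ x := le_trans (by positivity) hx
  have hfact : ((j + 2 * i + 1)! : ℝ) ≤ x ^ (2 * i + 1) * j ! := by
    calc ((j + 2 * i + 1)! : ℝ) ≤ (j + i + 1 : ℝ) ^ (2 * i + 1) * j ! := by
          exact_mod_cast Nat.factorial_add_two_mul_add_one_le j i
      _ ≤ x ^ (2 * i + 1) * j ! := by gcongr
  rw [div_le_div_iff₀ (by positivity) (by positivity)]
  calc x ^ j * ((j + 2 * i + 1)! : ℝ) ≤ x ^ j * (x ^ (2 * i + 1) * j !) := by gcongr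
    _ = x ^ (j + 2 * i + 1) * j ! := by ring

theorem two_mul_sum_range_pow_div_factorial_le_exp {x : ℝ} {k : ℕ} (hx : (k + 1 : ℝ) ≤ x) :
    2 * ∑ j ∈ range (k + 1), x ^ j / j ! ≤ exp x := by
  have hx0 : 0 ≤ x := le_trans (by positivity) hx
  have hmirror : ∑ j ∈ range (k + 1), x ^ j / j !
      ≤ ∑ i ∈ range (k + 1), x ^ (k + 1 + i) / (k + 1 + i)! := by
    rw [← sum_range_reflect]
    refine sum_le_sum fun i hi => ?_
    have hik : i ≤ k := Nat.lt_succ_iff.mp (mem_range.mp hi)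
    have h := pow_div_factorial_le_pow_add_div_factorial (x := x) (j := k - i) (i := i)
      (by rw [Nat.cast_sub hik]; linarith)
    rwa [show k - i + 2 * i + 1 = k + 1 + i by omega] at h
  have hsplit := sum_range_add (fun j => x ^ j / j !) (k + 1) (k + 1)
  have hexp := sum_le_exp_of_nonneg hx0 ((k + 1) + (k + 1))
  linarith

theorem hasSum_pow_div_factorial_add (x : ℝ) (n : ℕ) :
    HasSum (fun i => x ^ (i + n) / (i + n)!) (exp x - ∑ j ∈ range n, x ^ j / j !) := by
  rw [hasSum_nat_add_iff' n (f := fun j => x ^ j / j !), exp_eq_exp_ℝ]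
  exact NormedSpace.expSeries_div_hasSum_exp x

theorem exp_sub_sum_range_le {x : ℝ} (hx : 0 ≤ x) {n : ℕ} (hxn : x < n + 1) :
    exp x - ∑ j ∈ range n, x ^ j / j ! ≤ x ^ n / n ! * ((n + 1) / (n + 1 - x)) := by
  set r := x / (n + 1)
  have hr : r < 1 := (div_lt_one (by positivity)).mpr hxn
  have hgeom := (hasSum_geometric_of_lt_one (by positivity) hr).mul_left (x ^ n / n !)
  have hr' : (1 - r)⁻¹ = (n + 1) / (n + 1 - x) := by
    rw [← one_div, one_sub_div (by positivity), one_div_div]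
  rw [← hr']
  refine hasSum_le (fun i => ?_) (hasSum_pow_div_factorial_add x n) hgeom
  have hfact : (n ! * (n + 1) ^ i : ℝ) ≤ (n + i)! := by
    exact_mod_cast Nat.factorial_mul_pow_le_factorial
  calc x ^ (i + n) / (i + n)! ≤ x ^ (i + n) / (n ! * (n + 1) ^ i) := by
        rw [add_comm i n]; gcongr
    _ = x ^ n / n ! * r ^ i := by rw [div_pow]; field_simp; ring

theorem half_exp_sub_le (k : ℕ) :
    1 / 2 * exp ((k : ℝ) + 1) - ((k : ℝ) + 1) ^ k / k !
      ≤ ((k : ℝ) + 1) ^ (k + 2) / (k + 2)! * ((k + 3) / 2) := by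
  set x : ℝ := k + 1
  have hhead := two_mul_sum_range_pow_div_factorial_le_exp (x := x) (k := k) le_rfl
  have htail := exp_sub_sum_range_le (x := x) (by positivity) (n := k + 2) (by push_cast; linarith)
  have htop : x ^ (k + 1) / (k + 1)! = x ^ k / k ! := by
    rw [pow_succ, Nat.factorial_succ, Nat.cast_mul]; push_cast
    field_simp
    rfl
  rw [sum_range_succ, htop] at htail
  convert_to
    _ ≤ x ^ (k + 2) / (k + 2)! * ((((k + 2 : ℕ) : ℝ) + 1) / (((k + 2 : ℕ) : ℝ) + 1 - x)) using 3
  · push_cast; ring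
  · push_cast; ring
  linarith

theorem succ_pow_succ_mul_lt (k : ℕ) (hk : 4 ≤ k) :
    ((k : ℝ) + 1) ^ (k + 1) * (k + 3) < 4 * (k + 2) * (k : ℝ) ^ (k + 1) := by
  have hk4 : (4 : ℝ) ≤ k := by exact_mod_cast hk
  have hkpos : (0 : ℝ) < k := by linarith
  have hpow : ((k : ℝ) + 1) ^ k ≤ exp 1 * (k : ℝ) ^ k := by
    have h := one_add_inv_pow_le_exp (n := k)
    rwa [show (1 + (k : ℝ)⁻¹) = (k + 1) / k by field_simp, div_pow,
      div_le_iff₀ (by positivity)] at h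
  have hpoly : exp 1 * ((k + 1) * (k + 3)) < 4 * (k * (k + 2)) := by
    have := mul_lt_mul_of_pos_right exp_one_lt_d9 (by positivity : (0 : ℝ) < (k + 1) * (k + 3))
    nlinarith
  calc ((k : ℝ) + 1) ^ (k + 1) * (k + 3) = ((k : ℝ) + 1) ^ k * ((k + 1) * (k + 3)) := by ring
    _ ≤ exp 1 * (k : ℝ) ^ k * ((k + 1) * (k + 3)) := by gcongr
    _ < (k : ℝ) ^ k * (4 * (k * (k + 2))) := by nlinarith [pow_pos hkpos k]
    _ = 4 * (k + 2) * (k : ℝ) ^ (k + 1) := by ring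

theorem pow_div_factorial_mul_lt (k : ℕ) (hk : 4 ≤ k) :
    ((k : ℝ) + 1) ^ (k + 2) / (k + 2)! * ((k + 3) / 2) < 2 * (k : ℝ) ^ (k + 1) / k ! := by
  have hfact : ((k + 2)! : ℝ) = (k + 2) * (k + 1) * k ! := by
    push_cast [Nat.factorial_succ]; ring
  rw [hfact, div_mul_eq_mul_div, div_lt_div_iff₀ (by positivity) (by positivity)]
  have h := succ_pow_succ_mul_lt k hk
  calc ((k : ℝ) + 1) ^ (k + 2) * ((k + 3) / 2) * k !
        = ((k : ℝ) + 1) ^ (k + 1) * (k + 3) * ((k + 1) * k !) / 2 := by ring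
    _ < 4 * (k + 2) * (k : ℝ) ^ (k + 1) * ((k + 1) * k !) / 2 := by gcongr
    _ = 2 * k ^ (k + 1) * ((k + 2) * (k + 1) * k !) := by ring

theorem half_exp_sub_lt_of_le_three (k : ℕ) (hk : 0 < k) (hk3 : k ≤ 3) :
    1 / 2 * exp ((k : ℝ) + 1) - ((k : ℝ) + 1) ^ k / k ! < 2 * (k : ℝ) ^ (k + 1) / k ! := by
  have he : exp ((k : ℝ) + 1) < 2.72 ^ (k + 1) := by
    rw [show ((k : ℝ) + 1) = ((k + 1 : ℕ) : ℝ) by push_cast; ring, ← exp_one_pow]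
    exact pow_lt_pow_left₀ (exp_one_lt_d9.trans (by norm_num)) (exp_pos 1).le (by omega)
  interval_cases k <;> norm_num [Nat.factorial] at he ⊢ <;> linarith

theorem stmt15 (k : ℕ) (hk : 0 < k) :
    (∑ j ∈ Finset.range k, ((k : ℝ) + 1) ^ j / (Nat.factorial j : ℝ)
        ≤ (1/2) * Real.exp ((k : ℝ) + 1) - ((k : ℝ) + 1) ^ k / (Nat.factorial k : ℝ)) ∧
      ((1/2) * Real.exp ((k : ℝ) + 1) - ((k : ℝ) + 1) ^ k / (Nat.factorial k : ℝ)
        < 2 * (k : ℝ) ^ (k + 1) / (Nat.factorial k : ℝ)) ∧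
      (∑ j ∈ Finset.range k, ((k : ℝ) + 1) ^ j / (Nat.factorial j : ℝ)
        < 2 * (k : ℝ) ^ (k + 1) / (Nat.factorial k : ℝ)) := by
  have hhead : ∑ j ∈ range k, ((k : ℝ) + 1) ^ j / j !
      ≤ 1 / 2 * exp ((k : ℝ) + 1) - ((k : ℝ) + 1) ^ k / k ! := by
    have h := two_mul_sum_range_pow_div_factorial_le_exp (x := (k : ℝ) + 1) (k := k) le_rfl
    rw [sum_range_succ] at h
    linarith
  have htail : 1 / 2 * exp ((k : ℝ) + 1) - ((k : ℝ) + 1) ^ k / k !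
      < 2 * (k : ℝ) ^ (k + 1) / k ! := by
    rcases le_or_gt 4 k with hk4 | hk4
    · exact (half_exp_sub_le k).trans_lt (pow_div_factorial_mul_lt k hk4)
    · exact half_exp_sub_lt_of_le_three k hk (by omega)
  exact ⟨hhead, htail, hhead.trans_lt htail⟩
end

section
/- Let γ ∈ (0,1) and define c(γ) = (1-γ)·(Γ(1-γ))^{1/γ}. Then c(γ) ∈ [1, e^{γ*}] for all γ ∈ (0,1), where γ* is the Euler–Mascheroni constant; moreover lim_{γ → 0⁺} c(γ) = e^{γ*} and lim_{γ → 1⁻} c(γ) = 1. -/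
/-!
Write `c(γ) = exp E(γ)` with `E(γ) = log (1 - γ) + log Γ(1 - γ) / γ` and `L = log ∘ Γ`.
Convexity of `L` and `L'(1) = -γ*` give the tangent bound `L(x) ≥ -γ* (x - 1)`, hence
`E(γ) ≥ γ* + log (1 - γ)`; averaging it at `1 + x` and at `x` (shifted by `L(1 + x) = L(x) + log x`)
gives `L(1 + x) ≥ x log x` on `(0, 1]`, hence `E ≥ 0`. The upper bound `E ≤ γ*` comes from the
Weierstrass series `L(1 - γ) - γ γ* = ∑ₖ (-log (1 - γ/k) - γ/k)`: expanding each term in powers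
of `γ/k` and using `∑ₖ k⁻ᵐ ≤ m / (m - 1)` gives `L(1 - γ) ≤ γ γ* - γ log (1 - γ)`.
The limit at `0` follows by squeezing, the one at `1` from
`E(γ) = (L(2 - γ) - (1 - γ) log (1 - γ)) / γ` and continuity.
-/

open Filter Finset Topology

theorem ConvexOn.add_mul_sub_le_of_hasDerivAt {S : Set ℝ} {f : ℝ → ℝ} {p d x : ℝ}
    (hf : ConvexOn ℝ S f) (hp : p ∈ S) (hx : x ∈ S) (hd : HasDerivAt f d p) :
    f p + d * (x - p) ≤ f x := by
  rcases lt_trichotomy x p with h | rfl | h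
  · have := hf.slope_le_of_hasDerivAt hx hp h hd
    rw [slope_def_field, div_le_iff₀ (sub_pos.2 h)] at this
    linarith
  · simp
  · have := hf.le_slope_of_hasDerivAt hp hx h hd
    rw [slope_def_field, le_div_iff₀ (sub_pos.2 h)] at this
    linarith

theorem pow_add_mul_pow_le_add_one_pow {a : ℝ} (ha : 0 ≤ a) (k : ℕ) :
    a ^ (k + 1) + (k + 1) * a ^ k ≤ (a + 1) ^ (k + 1) := by
  induction k with
  | zero => simp
  | succ k ih =>
    have expand : (a ^ (k + 1) + (k + 1) * a ^ k) * (a + 1)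
        = a ^ (k + 2) + (k + 2) * a ^ (k + 1) + (k + 1) * a ^ k := by ring
    have := pow_nonneg ha k
    calc a ^ (k + 1 + 1) + ((k + 1 : ℕ) + 1) * a ^ (k + 1)
        ≤ (a ^ (k + 1) + (k + 1) * a ^ k) * (a + 1) := by push_cast; nlinarith
      _ ≤ (a + 1) ^ (k + 1) * (a + 1) := by gcongr
      _ = (a + 1) ^ (k + 1 + 1) := by ring

theorem one_div_add_one_pow_le_sub_div {a : ℝ} (ha : 0 < a) (k : ℕ) :
    1 / (a + 1) ^ (k + 2) ≤ (1 / a ^ (k + 1) - 1 / (a + 1) ^ (k + 1)) / (k + 1) := by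
  have key : (k + 1) * a ^ (k + 1) ≤ (a + 1) * ((a + 1) ^ (k + 1) - a ^ (k + 1)) := by
    have := pow_add_mul_pow_le_add_one_pow ha.le (k + 1)
    push_cast at this
    linear_combination this
  rw [div_sub_div _ _ (by positivity) (by positivity), div_div,
    div_le_div_iff₀ (by positivity) (by positivity)]
  calc 1 * (a ^ (k + 1) * (a + 1) ^ (k + 1) * (k + 1))
      = (a + 1) ^ (k + 1) * ((k + 1) * a ^ (k + 1)) := by ring
    _ ≤ (a + 1) ^ (k + 1) * ((a + 1) * ((a + 1) ^ (k + 1) - a ^ (k + 1))) := by gcongr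
    _ = (1 * (a + 1) ^ (k + 1) - a ^ (k + 1) * 1) * (a + 1) ^ (k + 2) := by ring

theorem sum_range_one_div_pow_le (k n : ℕ) :
    ∑ i ∈ range n, 1 / ((i : ℝ) + 1) ^ (k + 2) ≤ (k + 2) / (k + 1) := by
  set f : ℕ → ℝ := fun i => 1 / ((i : ℝ) + 1) ^ (k + 1)
  have telescope (i : ℕ) : 1 / ((i + 1 : ℕ) + 1 : ℝ) ^ (k + 2) ≤ (f i - f (i + 1)) / (k + 1) := by
    simpa [f, add_assoc, one_add_one_eq_two] using
      one_div_add_one_pow_le_sub_div (a := i + 1) (by positivity) k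
  calc ∑ i ∈ range n, 1 / ((i : ℝ) + 1) ^ (k + 2)
      ≤ ∑ i ∈ range (n + 1), 1 / ((i : ℝ) + 1) ^ (k + 2) :=
        sum_le_sum_of_subset_of_nonneg (range_subset_range.2 n.le_succ)
          (fun _ _ _ => by positivity)
    _ = ∑ i ∈ range n, 1 / ((i + 1 : ℕ) + 1 : ℝ) ^ (k + 2) + 1 := by simp [sum_range_succ']
    _ ≤ ∑ i ∈ range n, (f i - f (i + 1)) / (k + 1) + 1 := by
        gcongr ∑ i ∈ range n, ?_ + 1 with i; exact telescope i
    _ = (1 - f n) / (k + 1) + 1 := by rw [← sum_div, sum_range_sub']; simp [f]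
    _ ≤ (k + 2) / (k + 1) := by
        have : 0 ≤ f n := by positivity
        rw [div_add_one (by positivity), div_le_div_iff_of_pos_right (by positivity)]
        linarith

namespace Real

theorem hasSum_pow_div_neg_log_one_sub_sub {t : ℝ} (ht : |t| < 1) :
    HasSum (fun m : ℕ => t ^ (m + 2) / (m + 2)) (-log (1 - t) - t) := by
  have := (hasSum_nat_add_iff' 1).2 (hasSum_pow_div_log_of_abs_lt_one ht)
  norm_num [add_assoc, one_add_one_eq_two] at this
  exact this

theorem sum_range_neg_log_one_sub_div_le {x : ℝ} (hx0 : 0 ≤ x) (hx1 : x < 1) (n : ℕ) :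
    ∑ k ∈ range n, (-log (1 - x / (k + 1)) - x / (k + 1)) ≤ -(x * log (1 - x)) := by
  have hLHS : HasSum (fun m : ℕ => ∑ k ∈ range n, (x / (k + 1)) ^ (m + 2) / (m + 2))
      (∑ k ∈ range n, (-log (1 - x / (k + 1)) - x / (k + 1))) := by
    refine hasSum_sum fun k _ => hasSum_pow_div_neg_log_one_sub_sub ?_
    rw [abs_of_nonneg (by positivity), div_lt_one (by positivity)]
    linarith [(k.cast_nonneg : (0 : ℝ) ≤ k)]
  have hRHS : HasSum (fun m : ℕ => x * (x ^ (m + 1) / (m + 1))) (x * -log (1 - x)) :=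
    (hasSum_pow_div_log_of_abs_lt_one (by rwa [abs_of_nonneg hx0])).mul_left x
  rw [← mul_neg]
  refine hasSum_le (fun m => ?_) hLHS hRHS
  calc ∑ k ∈ range n, (x / (k + 1)) ^ (m + 2) / (m + 2)
      = x ^ (m + 2) / (m + 2) * ∑ k ∈ range n, 1 / ((k : ℝ) + 1) ^ (m + 2) := by
        rw [mul_sum]; congr 1 with k; rw [div_pow]; ring
    _ ≤ x ^ (m + 2) / (m + 2) * ((m + 2) / (m + 1)) := by
        gcongr; exact sum_range_one_div_pow_le m n
    _ = x * (x ^ (m + 1) / (m + 1)) := by field_simp; ring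

theorem hasDerivAt_log_Gamma_one :
    HasDerivAt (fun x => log (Gamma x)) (-eulerMascheroniConstant) 1 := by
  simpa [Gamma_one] using hasDerivAt_Gamma_one.log (by simp [Gamma_one])

theorem neg_eulerMascheroniConstant_mul_le_log_Gamma {x : ℝ} (hx : 0 < x) :
    -eulerMascheroniConstant * (x - 1) ≤ log (Gamma x) := by
  simpa [Gamma_one] using convexOn_log_Gamma.add_mul_sub_le_of_hasDerivAt
    (Set.mem_Ioi.2 one_pos) (Set.mem_Ioi.2 hx) hasDerivAt_log_Gamma_one

theorem mul_log_le_log_Gamma_add_one {x : ℝ} (hx0 : 0 < x) (hx1 : x ≤ 1) :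
    x * log x ≤ log (Gamma (x + 1)) := by
  have at_x := neg_eulerMascheroniConstant_mul_le_log_Gamma hx0
  have at_x_add_one := neg_eulerMascheroniConstant_mul_le_log_Gamma (x := x + 1) (by linarith)
  rw [Gamma_add_one hx0.ne', log_mul hx0.ne' (Gamma_pos_of_pos hx0).ne'] at at_x_add_one ⊢
  -- the weights `1 - x` and `x` make the `γ*` terms cancel
  nlinarith [mul_le_mul_of_nonneg_left at_x_add_one (sub_nonneg.2 hx1),
    mul_le_mul_of_nonneg_left at_x hx0.le]

theorem hasSum_log_Gamma_one_sub {x : ℝ} (hx : x < 1) :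
    HasSum (fun k : ℕ => -log (1 - x / (k + 1)) - x / (k + 1))
      (log (Gamma (1 - x)) - x * eulerMascheroniConstant) := by
  have hpos (k : ℕ) : 0 < 1 - x + k := by linarith [(k.cast_nonneg : (0 : ℝ) ≤ k)]
  have hdiv (k : ℕ) : 1 - x / (k + 1) = (1 - x + k) / (k + 1) := by field_simp; ring
  have hterm (k : ℕ) : -log (1 - x / (k + 1)) - x / (k + 1)
      = log ((k : ℝ) + 1) - log (1 - x + k) - x * ((k : ℝ) + 1)⁻¹ := by
    rw [hdiv, log_div (hpos k).ne' (by positivity)]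
    ring
  have hnonneg (k : ℕ) : 0 ≤ -log (1 - x / (k + 1)) - x / (k + 1) := by
    have : 0 < 1 - x / (k + 1) := by rw [hdiv]; exact div_pos (hpos k) (by positivity)
    linarith [log_le_sub_one_of_pos this]
  rw [hasSum_iff_tendsto_nat_of_nonneg hnonneg]
  have hlim := ((BohrMollerup.tendsto_log_gamma (by linarith : 0 < 1 - x)).sub
      (tendsto_harmonic_sub_log.const_mul x)).add
      ((tendsto_log_comp_add_sub_log (1 - x)).comp tendsto_natCast_atTop_atTop)
  rw [add_zero] at hlim
  refine hlim.congr fun n => ?_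
  have hfact : log (n.factorial : ℝ) = ∑ k ∈ range n, log ((k : ℝ) + 1) := by
    rw [← prod_range_add_one_eq_factorial, Nat.cast_prod, log_prod fun k _ => by positivity]
    push_cast; rfl
  simp only [Function.comp_apply, hterm, sum_sub_distrib, ← mul_sum,
    BohrMollerup.logGammaSeq, sum_range_succ, hfact, harmonic]
  push_cast
  rw [add_comm (n : ℝ) (1 - x)]
  ring

theorem log_Gamma_one_sub_le {x : ℝ} (hx0 : 0 ≤ x) (hx1 : x < 1) :
    log (Gamma (1 - x)) ≤ x * eulerMascheroniConstant - x * log (1 - x) := by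
  have := le_of_tendsto' (hasSum_log_Gamma_one_sub hx1).tendsto_sum_nat
    (sum_range_neg_log_one_sub_div_le hx0 hx1)
  linarith

noncomputable def gammaConst (γ : ℝ) : ℝ := (1 - γ) * Gamma (1 - γ) ^ (1 / γ)

noncomputable def logGammaConst (γ : ℝ) : ℝ := log (1 - γ) + log (Gamma (1 - γ)) / γ

theorem gammaConst_eq_exp {x : ℝ} (hx : x < 1) : gammaConst x = exp (logGammaConst x) := by
  have hx' : 0 < 1 - x := by linarith
  rw [logGammaConst, exp_add, exp_log hx', gammaConst, rpow_def_of_pos (Gamma_pos_of_pos hx'),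
    mul_one_div]

theorem eulerMascheroniConstant_add_log_le_logGammaConst {x : ℝ} (hx0 : 0 < x) (hx1 : x < 1) :
    eulerMascheroniConstant + log (1 - x) ≤ logGammaConst x := by
  have := neg_eulerMascheroniConstant_mul_le_log_Gamma (x := 1 - x) (by linarith)
  rw [logGammaConst, add_comm, add_le_add_iff_left, le_div_iff₀ hx0]
  linarith

theorem logGammaConst_le {x : ℝ} (hx0 : 0 < x) (hx1 : x < 1) :
    logGammaConst x ≤ eulerMascheroniConstant := by
  have := log_Gamma_one_sub_le hx0.le hx1
  rw [logGammaConst, ← le_sub_iff_add_le', div_le_iff₀ hx0]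
  linarith

theorem logGammaConst_nonneg {x : ℝ} (hx0 : 0 < x) (hx1 : x < 1) : 0 ≤ logGammaConst x := by
  have hx' : 0 < 1 - x := by linarith
  have := mul_log_le_log_Gamma_add_one hx' (by linarith)
  rw [Gamma_add_one hx'.ne', log_mul hx'.ne' (Gamma_pos_of_pos hx').ne'] at this
  rw [logGammaConst, ← neg_le_iff_add_nonneg', le_div_iff₀ hx0]
  linarith

theorem gammaConst_mem_Icc {x : ℝ} (hx : x ∈ Set.Ioo 0 1) :
    gammaConst x ∈ Set.Icc 1 (exp eulerMascheroniConstant) := by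
  rw [gammaConst_eq_exp hx.2]
  exact ⟨one_le_exp (logGammaConst_nonneg hx.1 hx.2), exp_le_exp.2 (logGammaConst_le hx.1 hx.2)⟩

theorem tendsto_gammaConst_nhdsGT_zero :
    Tendsto gammaConst (𝓝[>] 0) (𝓝 (exp eulerMascheroniConstant)) := by
  have hIoo : Set.Ioo (0 : ℝ) 1 ∈ 𝓝[>] 0 := Ioo_mem_nhdsGT one_pos
  have hlog : Tendsto (fun x => eulerMascheroniConstant + log (1 - x)) (𝓝[>] 0)
      (𝓝 eulerMascheroniConstant) := by
    have : ContinuousAt (fun x => eulerMascheroniConstant + log (1 - x)) 0 :=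
      continuousAt_const.add ((continuousAt_log (by norm_num)).comp (by fun_prop))
    simpa using this.tendsto.mono_left nhdsWithin_le_nhds
  have hexponent := tendsto_of_tendsto_of_tendsto_of_le_of_le' hlog tendsto_const_nhds
    (eventually_of_mem hIoo fun x hx => eulerMascheroniConstant_add_log_le_logGammaConst hx.1 hx.2)
    (eventually_of_mem hIoo fun x hx => logGammaConst_le hx.1 hx.2)
  exact ((continuous_exp.tendsto _).comp hexponent).congr'
    (eventually_of_mem hIoo fun x hx => (gammaConst_eq_exp hx.2).symm)

theorem tendsto_gammaConst_nhdsLT_one : Tendsto gammaConst (𝓝[<] 1) (𝓝 1) := by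
  have hIoo : Set.Ioo (0 : ℝ) 1 ∈ 𝓝[<] 1 := Ioo_mem_nhdsLT one_pos
  have hexponent : ContinuousAt
      (fun x => (log (Gamma (2 - x)) - (1 - x) * log (1 - x)) / x) 1 := by
    refine ContinuousAt.div (ContinuousAt.sub ?_ ?_) continuousAt_id one_ne_zero
    · have hΓ : ContinuousAt Gamma (2 - 1) := by
        norm_num; exact hasDerivAt_Gamma_one.continuousAt
      exact (continuousAt_log (by norm_num [Gamma_one])).comp (hΓ.comp (by fun_prop))
    · exact (continuous_mul_log.comp (continuous_const.sub continuous_id)).continuousAt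
  have hlim : Tendsto (fun x => exp ((log (Gamma (2 - x)) - (1 - x) * log (1 - x)) / x))
      (𝓝[<] 1) (𝓝 1) := by
    have := ((continuous_exp.tendsto _).comp hexponent.tendsto).mono_left
      (nhdsWithin_le_nhds (s := Set.Iio 1))
    norm_num [Gamma_one, Function.comp_def] at this
    exact this
  refine hlim.congr' (eventually_of_mem hIoo fun x hx => ?_)
  have hx' : 0 < 1 - x := by linarith [hx.2]
  rw [gammaConst_eq_exp hx.2, logGammaConst, show 2 - x = 1 - x + 1 by ring,
    Gamma_add_one hx'.ne', log_mul hx'.ne' (Gamma_pos_of_pos hx').ne']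
  congr 1
  field_simp [hx.1.ne']
  ring

end Real

theorem stmt18 :
    (∀ γ : ℝ, γ ∈ Set.Ioo (0 : ℝ) 1 →
      (1 - γ) * Real.Gamma (1 - γ) ^ (1/γ)
        ∈ Set.Icc (1 : ℝ) (Real.exp Real.eulerMascheroniConstant)) ∧
    Filter.Tendsto (fun γ : ℝ => (1 - γ) * Real.Gamma (1 - γ) ^ (1/γ))
      (nhdsWithin 0 (Set.Ioi 0)) (nhds (Real.exp Real.eulerMascheroniConstant)) ∧
    Filter.Tendsto (fun γ : ℝ => (1 - γ) * Real.Gamma (1 - γ) ^ (1/γ))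
      (nhdsWithin 1 (Set.Iio 1)) (nhds 1) :=
  ⟨fun _ => Real.gammaConst_mem_Icc, Real.tendsto_gammaConst_nhdsGT_zero,
    Real.tendsto_gammaConst_nhdsLT_one⟩
end
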